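/- The characteristic polynomial of the 7×7 matrix M is x·(x − 2)³·(x − 3)³; equivalently, the eigenvalues of M, with multiplicity, are {0, 2, 2, 2, 3, 3, 3}. -/

import Mathlib

open Matrix Real MeasureTheory

noncomputable def M : Matrix (Fin 7) (Fin 7) ℝ :=
  !![21/8, 0, Real.sqrt 15 / 8, 0, 0, 0, 0;
     0, 0, 0, 0, 0, 0, 0;
     Real.sqrt 15 / 8, 0, 19/8, 0, 0, 0, 0;
     0, 0, 0, 3, 0, 0, 0;
     0, 0, 0, 0, 19/8, 0, -(Real.sqrt 15 / 8);
     0, 0, 0, 0, 0, 2, 0;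
     0, 0, 0, 0, -(Real.sqrt 15 / 8), 0, 21/8]

/-!
Permuting the coordinates to the order 0, 2, 4, 6, 1, 3, 5 makes `M` block diagonal: two
symmetric 2 × 2 blocks, each of trace 5 and determinant 21·19/64 − 15/64 = 6 (hence eigenvalues
2 and 3), and the diagonal block diag(0, 3, 2).
-/

open Polynomial

theorem Matrix.charpoly_symm_fin_two {R : Type*} [CommRing R] [Nontrivial R] {a b d s t : R}
    (htrace : a + d = s + t) (hdet : a * d - b * b = s * t) :
    (!![a, b; b, d]).charpoly = (X - C s) * (X - C t) := by
  rw [charpoly_fin_two, trace_fin_two_of, det_fin_two_of, htrace, hdet, C_add, C_mul]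
  ring

theorem charpoly_coupled_block {a b d : ℝ} (htrace : a + d = 5) (hb : b * b = 15 / 64)
    (had : a * d = 399 / 64) : (!![a, b; b, d]).charpoly = (X - C 2) * (X - C 3) :=
  charpoly_symm_fin_two (by linarith) (by linarith)

def blockIndexEquiv : (Fin 2 ⊕ Fin 2) ⊕ Fin 3 ≃ Fin 7 where
  toFun
    | .inl (.inl i) => ![0, 2] i
    | .inl (.inr i) => ![4, 6] i
    | .inr i => ![1, 3, 5] i
  invFun := ![.inl (.inl 0), .inr 0, .inl (.inl 1), .inr 1, .inl (.inr 0), .inr 2, .inl (.inr 1)]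
  left_inv := by decide
  right_inv := by decide

theorem reindex_blockIndexEquiv_eq_M :
    reindex blockIndexEquiv blockIndexEquiv
      (fromBlocks
        (fromBlocks !![21/8, √15/8; √15/8, 19/8] 0 0 !![19/8, -(√15/8); -(√15/8), 21/8]) 0 0
        (diagonal ![0, 3, 2])) = M := by
  ext i j
  fin_cases i <;> fin_cases j <;> simp [blockIndexEquiv, M]

theorem M_charpoly :
    M.charpoly = Polynomial.X * (Polynomial.X - Polynomial.C 2)^3 *
      (Polynomial.X - Polynomial.C 3)^3 := by
  have hsqrt : √15 / 8 * (√15 / 8) = 15 / 64 := by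
    rw [div_mul_div_comm, mul_self_sqrt (by norm_num)]; norm_num
  rw [← reindex_blockIndexEquiv_eq_M, charpoly_reindex, charpoly_fromBlocks_zero₁₂,
    charpoly_fromBlocks_zero₁₂, charpoly_coupled_block (by norm_num) hsqrt (by norm_num),
    charpoly_coupled_block (by norm_num) (by rw [neg_mul_neg, hsqrt]) (by norm_num),
    charpoly_diagonal, Fin.prod_univ_three]
  simp only [cons_val_zero, cons_val_one, cons_val_two, head_cons, tail_cons, map_zero, sub_zero]
  ring
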